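/- arXiv:math/0309143 — 4 statements merged into one kernel-verified Lean document; each statement's English description precedes it below -/
import Mathlib

section
/- Let A be a complex *-algebra with a positive trace τ (i.e. τ(a*a) ≥ 0 and τ(ab) = τ(ba)) and two commuting *-derivations ∂₁, ∂₂ satisfying τ(∂μ(a)) = 0 for all a. For a self-adjoint projection p ∈ A define S(p) = τ(∂₁(p)∂₁(p) + ∂₂(p)∂₂(p)) and Q(p) = -i·τ(p(∂₁(p)∂₂(p) - ∂₂(p)∂₁(p))). Then S(p) ≥ 2|Q(p)|. -/
/-!
Write `u = ∂₁p`, `v = ∂₂p`. Both are self-adjoint, and differentiating `p² = p` gives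
`u = up + pu`, so by cyclicity `τ(u²) = 2τ(pu²)`, and likewise for `v`. Positivity of `τ` applied to
`w = (u ± i v) p` gives `0 ≤ τ(w* w) = τ(p(u² + v²)) ± i τ(p[u, v])`; the two signs together say
exactly that `i τ(p[u, v])` is real and bounded in modulus by `τ(p(u² + v²)) = S(p)/2`.
-/

open ComplexOrder

theorem Complex.ofReal_norm_le_of_nonneg_add_I_mul {x F : ℂ}
    (hplus : 0 ≤ x + I * F) (hminus : 0 ≤ x - I * F) : (‖F‖ : ℂ) ≤ x := by
  rw [Complex.le_def] at hplus hminus ⊢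
  obtain ⟨hplus_re, hplus_im⟩ := hplus
  obtain ⟨hminus_re, hminus_im⟩ := hminus
  simp only [add_re, add_im, sub_re, sub_im, mul_re, mul_im, I_re, I_im, zero_re, zero_im,
    zero_mul, one_mul, zero_sub, zero_add] at hplus_re hplus_im hminus_re hminus_im
  have hF_re : F.re = 0 := by linarith
  have hnorm : ‖F‖ = |F.im| := by
    simp [norm_def, normSq_apply, hF_re, Real.sqrt_mul_self_eq_abs]
  rw [ofReal_re, ofReal_im, hnorm]
  exact ⟨abs_le.2 ⟨by linarith, by linarith⟩, by linarith⟩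

theorem eq_mul_add_mul_of_leibniz_of_isIdempotentElem {A : Type*} [Ring A] {d : A → A}
    (hleib : ∀ a b : A, d (a * b) = d a * b + a * d b) {p : A} (hp : IsIdempotentElem p) :
    d p = d p * p + p * d p := by
  rw [← hleib, hp.eq]

section Trace

variable {A : Type*} [Ring A] [Algebra ℂ A] {τ : A →ₗ[ℂ] ℂ}

theorem trace_mul_mul_of_isIdempotentElem (htrace : ∀ a b : A, τ (a * b) = τ (b * a))
    {p : A} (hp : IsIdempotentElem p) (a : A) : τ (p * (a * p)) = τ (p * a) := by
  rw [htrace, mul_assoc, hp.eq, htrace]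

theorem trace_mul_self_eq_two_mul_of_eq_mul_add_mul (htrace : ∀ a b : A, τ (a * b) = τ (b * a))
    {p x : A} (hx : x = x * p + p * x) : τ (x * x) = 2 * τ (p * (x * x)) := by
  have hsplit : x * x = x * (p * x) + p * (x * x) := by
    nth_rw 1 [hx]
    rw [add_mul, mul_assoc, mul_assoc]
  have hcyc : τ (x * (p * x)) = τ (p * (x * x)) := by rw [htrace, mul_assoc]
  rw [congrArg τ hsplit, map_add, hcyc, two_mul]

variable [StarRing A] [StarModule ℂ A]

/-- For `s = ± i` this is positivity of `τ` at `(u + s v) p`. -/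
theorem nonneg_trace_compress_add_mul_commutator (hpos : ∀ a : A, 0 ≤ τ (star a * a))
    (htrace : ∀ a b : A, τ (a * b) = τ (b * a)) {p u v : A} (hp : IsIdempotentElem p)
    (hps : IsSelfAdjoint p) (hu : IsSelfAdjoint u) (hv : IsSelfAdjoint v) {s : ℂ}
    (hs_star : star s = -s) (hs_sq : s * s = -1) :
    0 ≤ τ (p * (u * u + v * v)) + s * τ (p * (u * v - v * u)) := by
  have hstar : star ((u + s • v) * p) = p * (u - s • v) := by
    rw [star_mul, hps.star_eq, star_add, star_smul, hu.star_eq, hv.star_eq, hs_star, neg_smul,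
      ← sub_eq_add_neg]
  have hexpand : (u - s • v) * (u + s • v) = u * u + v * v + s • (u * v - v * u) := by
    simp only [mul_add, sub_mul, smul_mul_assoc, mul_smul_comm, smul_smul, hs_sq, neg_smul,
      one_smul, smul_sub]
    abel
  have h := hpos ((u + s • v) * p)
  rwa [hstar, mul_assoc, ← mul_assoc (u - s • v), trace_mul_mul_of_isIdempotentElem htrace hp, hexpand,
    mul_add, map_add, mul_smul_comm, map_smul, smul_eq_mul] at h

end Trace

theorem belavin_polyakov_bound_general
    (A : Type*) [Ring A] [Algebra ℂ A] [StarRing A] [StarModule ℂ A]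
    (τ : A →ₗ[ℂ] ℂ)
    (hpos : ∀ a : A, 0 ≤ τ (star a * a))
    (htrace : ∀ a b : A, τ (a * b) = τ (b * a))
    (d₁ d₂ : A →ₗ[ℂ] A)
    (hleib₁ : ∀ a b : A, d₁ (a * b) = d₁ a * b + a * d₁ b)
    (hleib₂ : ∀ a b : A, d₂ (a * b) = d₂ a * b + a * d₂ b)
    (hstar₁ : ∀ a : A, d₁ (star a) = star (d₁ a))
    (hstar₂ : ∀ a : A, d₂ (star a) = star (d₂ a))
    (p : A) (hp : p * p = p) (hps : star p = p) :
    (↑(2 * ‖-Complex.I * τ (p * (d₁ p * d₂ p - d₂ p * d₁ p))‖) : ℂ)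
      ≤ τ (d₁ p * d₁ p + d₂ p * d₂ p) := by
  have hu : IsSelfAdjoint (d₁ p) := by rw [IsSelfAdjoint, ← hstar₁, hps]
  have hv : IsSelfAdjoint (d₂ p) := by rw [IsSelfAdjoint, ← hstar₂, hps]
  have hnonneg {s : ℂ} (hs_star : star s = -s) (hs_sq : s * s = -1) :=
    nonneg_trace_compress_add_mul_commutator hpos htrace hp hps hu hv hs_star hs_sq
  have hplus := hnonneg (s := Complex.I) (by simp) Complex.I_mul_I
  have hminus := hnonneg (s := -Complex.I) (by simp) (by simp)
  rw [neg_mul, ← sub_eq_add_neg] at hminus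
  calc (↑(2 * ‖-Complex.I * τ (p * (d₁ p * d₂ p - d₂ p * d₁ p))‖) : ℂ)
      = 2 * ‖τ (p * (d₁ p * d₂ p - d₂ p * d₁ p))‖ := by simp
    _ ≤ 2 * τ (p * (d₁ p * d₁ p + d₂ p * d₂ p)) := by
      gcongr
      exact Complex.ofReal_norm_le_of_nonneg_add_I_mul hplus hminus
    _ = τ (d₁ p * d₁ p + d₂ p * d₂ p) := by
      rw [map_add, mul_add, map_add, mul_add,
        ← trace_mul_self_eq_two_mul_of_eq_mul_add_mul htrace
          (eq_mul_add_mul_of_leibniz_of_isIdempotentElem hleib₁ hp),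
        ← trace_mul_self_eq_two_mul_of_eq_mul_add_mul htrace
          (eq_mul_add_mul_of_leibniz_of_isIdempotentElem hleib₂ hp)]

/-- Belavin–Polyakov bound: `S(p) ≥ 2|Q(p)|` for a self-adjoint projection `p`
in a complex *-algebra with positive invariant trace and commuting *-derivations. -/
theorem belavin_polyakov_bound
    (A : Type*) [Ring A] [Algebra ℂ A] [StarRing A] [StarModule ℂ A]
    (τ : A →ₗ[ℂ] ℂ)
    (hpos : ∀ a : A, 0 ≤ τ (star a * a))
    (htrace : ∀ a b : A, τ (a * b) = τ (b * a))
    (d₁ d₂ : A →ₗ[ℂ] A)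
    (hleib₁ : ∀ a b : A, d₁ (a * b) = d₁ a * b + a * d₁ b)
    (hleib₂ : ∀ a b : A, d₂ (a * b) = d₂ a * b + a * d₂ b)
    (hstar₁ : ∀ a : A, d₁ (star a) = star (d₁ a))
    (hstar₂ : ∀ a : A, d₂ (star a) = star (d₂ a))
    (hcomm : ∀ a : A, d₁ (d₂ a) = d₂ (d₁ a))
    (hinv₁ : ∀ a : A, τ (d₁ a) = 0)
    (hinv₂ : ∀ a : A, τ (d₂ a) = 0)
    (p : A) (hp : p * p = p) (hps : star p = p) :
    (↑(2 * ‖-Complex.I * τ (p * (d₁ p * d₂ p - d₂ p * d₁ p))‖) : ℂ)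
      ≤ τ (d₁ p * d₁ p + d₂ p * d₂ p) :=
  belavin_polyakov_bound_general A τ hpos htrace d₁ d₂ hleib₁ hleib₂ hstar₁ hstar₂ p hp hps
end

section
/- Let A be an algebra with commuting derivations ∂₁, ∂₂, with associated holomorphic/antiholomorphic derivations ∂, ∂̄ and Laplacian Δ = g^{μν}∂μ∂ν = 4∂∂̄. If a projection p (p² = p) satisfies the self-duality equations ∂̄(p)·p = 0 and p·∂(p) = 0, then p satisfies the field equations pΔ(p) - Δ(p)p = 0. -/
/-- The holomorphic derivation `∂ = (1/(τ-τ̄))(-τ̄∂₁ + ∂₂)`. -/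
noncomputable def hol {A : Type*} [AddCommGroup A] [Module ℂ A]
    (d₁ d₂ : A →ₗ[ℂ] A) (τ : ℂ) : A →ₗ[ℂ] A :=
  (1 / (τ - (starRingEnd ℂ) τ)) • (-((starRingEnd ℂ) τ) • d₁ + d₂)

/-- The antiholomorphic derivation `∂̄ = (1/(τ-τ̄))(τ∂₁ - ∂₂)`. -/
noncomputable def antihol {A : Type*} [AddCommGroup A] [Module ℂ A]
    (d₁ d₂ : A →ₗ[ℂ] A) (τ : ℂ) : A →ₗ[ℂ] A :=
  (1 / (τ - (starRingEnd ℂ) τ)) • (τ • d₁ - d₂)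

/-!
Since `∂̄p · p = 0` and `p · ∂p = 0`, the Leibniz rule applied to `p = p²` gives `∂̄p = p · ∂̄p` and
`∂p = ∂p · p`. Differentiating these once more, `∂∂̄p - p · ∂∂̄p = ∂p · ∂̄p = ∂̄∂p - ∂̄∂p · p`,
and `∂∂̄ = ∂̄∂` turns this into `p · Δp = Δp · p`.
-/

/-- The Leibniz rule on a possibly noncommutative algebra, where Mathlib's `Derivation` does not
apply. -/
def LinearMap.IsDerivation {R A : Type*} [CommSemiring R] [Ring A] [Module R A]
    (d : A →ₗ[R] A) : Prop :=
  ∀ a b : A, d (a * b) = d a * b + a * d b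

namespace LinearMap.IsDerivation

variable {R A : Type*} [CommSemiring R] [Ring A] [Module R A] {d e : A →ₗ[R] A}

theorem add (hd : d.IsDerivation) (he : e.IsDerivation) : (d + e).IsDerivation := by
  intro a b
  simp only [add_apply, hd a b, he a b]
  noncomm_ring

theorem neg (hd : d.IsDerivation) : (-d).IsDerivation := by
  intro a b
  simp only [neg_apply, hd a b]
  noncomm_ring

theorem sub (hd : d.IsDerivation) (he : e.IsDerivation) : (d - e).IsDerivation := by
  simpa only [sub_eq_add_neg] using hd.add he.neg

theorem smul [IsScalarTower R A A] [SMulCommClass R A A] (c : R) (hd : d.IsDerivation) :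
    (c • d).IsDerivation := by
  intro a b
  simp only [smul_apply, hd a b, smul_add, smul_mul_assoc, mul_smul_comm]

theorem map_idem_eq_mul_map {p : A} (hd : d.IsDerivation) (hp : p * p = p) (h : d p * p = 0) :
    d p = p * d p := by
  simpa only [hp, h, zero_add] using hd p p

theorem map_idem_eq_map_mul {p : A} (hd : d.IsDerivation) (hp : p * p = p) (h : p * d p = 0) :
    d p = d p * p := by
  simpa only [hp, h, add_zero] using hd p p

theorem commute_map_map_of_selfDual (hd : d.IsDerivation) (he : e.IsDerivation)
    (hde : Commute d e) {p : A} (hp : p * p = p) (hep : e p * p = 0) (hdp : p * d p = 0) :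
    Commute p (d (e p)) := by
  have hE : e p = p * e p := he.map_idem_eq_mul_map hp hep
  have hD : d p = d p * p := hd.map_idem_eq_map_mul hp hdp
  have hde_p : d (e p) = e (d p) := LinearMap.congr_fun hde.eq p
  have h_left : d (e p) - p * d (e p) = d p * e p :=
    sub_eq_of_eq_add (by simpa only [← hE] using hd p (e p))
  have h_right : e (d p) - e (d p) * p = d p * e p :=
    sub_eq_of_eq_add' (by simpa only [← hD] using he (d p) p)
  rw [← hde_p] at h_right
  show p * d (e p) = d (e p) * p
  linear_combination (norm := noncomm_ring) h_right - h_left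

end LinearMap.IsDerivation

section Complex

variable {A : Type*} [Ring A] [Algebra ℂ A] {d₁ d₂ : A →ₗ[ℂ] A}

theorem isDerivation_hol (h₁ : d₁.IsDerivation) (h₂ : d₂.IsDerivation) (τ : ℂ) :
    (hol d₁ d₂ τ).IsDerivation :=
  ((h₁.smul _).add h₂).smul _

theorem isDerivation_antihol (h₁ : d₁.IsDerivation) (h₂ : d₂.IsDerivation) (τ : ℂ) :
    (antihol d₁ d₂ τ).IsDerivation :=
  ((h₁.smul _).sub h₂).smul _

theorem commute_hol_antihol (h : Commute d₁ d₂) (τ : ℂ) :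
    Commute (hol d₁ d₂ τ) (antihol d₁ d₂ τ) := by
  have h₁ : Commute (-(starRingEnd ℂ) τ • d₁ + d₂) d₁ :=
    ((Commute.refl d₁).smul_left _).add_left h.symm
  have h₂ : Commute (-(starRingEnd ℂ) τ • d₁ + d₂) d₂ :=
    (h.smul_left _).add_left (Commute.refl d₂)
  exact ((h₁.smul_right τ).sub_right h₂).smul_left _ |>.smul_right _

end Complex

theorem selfdual_implies_field_equations_general
    (A : Type*) [Ring A] [Algebra ℂ A]
    (d₁ d₂ : A →ₗ[ℂ] A)
    (hleib₁ : ∀ a b : A, d₁ (a * b) = d₁ a * b + a * d₁ b)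
    (hleib₂ : ∀ a b : A, d₂ (a * b) = d₂ a * b + a * d₂ b)
    (hcomm : ∀ a : A, d₁ (d₂ a) = d₂ (d₁ a))
    (τ : ℂ)
    (p : A) (hp : p * p = p)
    (hsd₁ : antihol d₁ d₂ τ p * p = 0)
    (hsd₂ : p * hol d₁ d₂ τ p = 0) :
    p * ((4 : ℂ) • hol d₁ d₂ τ (antihol d₁ d₂ τ p))
      - ((4 : ℂ) • hol d₁ d₂ τ (antihol d₁ d₂ τ p)) * p = 0 := by
  have h₁₂ : Commute d₁ d₂ := LinearMap.ext hcomm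
  have hΔ := LinearMap.IsDerivation.commute_map_map_of_selfDual (isDerivation_hol hleib₁ hleib₂ τ)
    (isDerivation_antihol hleib₁ hleib₂ τ) (commute_hol_antihol h₁₂ τ) hp hsd₁ hsd₂
  exact sub_eq_zero.mpr (hΔ.smul_right 4).eq

/-- A projection satisfying the self-duality equations satisfies the field equations
`pΔ(p) - Δ(p)p = 0` with `Δ = 4∂∂̄`. -/
theorem selfdual_implies_field_equations
    (A : Type*) [Ring A] [Algebra ℂ A]
    (d₁ d₂ : A →ₗ[ℂ] A)
    (hleib₁ : ∀ a b : A, d₁ (a * b) = d₁ a * b + a * d₁ b)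
    (hleib₂ : ∀ a b : A, d₂ (a * b) = d₂ a * b + a * d₂ b)
    (hcomm : ∀ a : A, d₁ (d₂ a) = d₂ (d₁ a))
    (τ : ℂ) (hτ : 0 < τ.im)
    (p : A) (hp : p * p = p)
    (hsd₁ : antihol d₁ d₂ τ p * p = 0)
    (hsd₂ : p * hol d₁ d₂ τ p = 0) :
    p * ((4 : ℂ) • hol d₁ d₂ τ (antihol d₁ d₂ τ p))
      - ((4 : ℂ) • hol d₁ d₂ τ (antihol d₁ d₂ τ p)) * p = 0 :=
  selfdual_implies_field_equations_general A d₁ d₂ hleib₁ hleib₂ hcomm τ p hp hsd₁ hsd₂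
end

section
/- Let A be an algebra with commuting derivations ∂₁, ∂₂, associated ∂, ∂̄, and Δ = 4∂∂̄. If a projection p satisfies the anti-self-duality equations ∂(p)·p = 0 and p·∂̄(p) = 0, then pΔ(p) - Δ(p)p = 0. -/
/-! The anti-self-duality equations `∂p · p = 0` and `p · ∂̄p = 0`, differentiated by `∂̄` and `∂`
respectively, both express `p · ∂∂̄p` and `∂̄∂p · p` as `-(∂p · ∂̄p)`; since `∂` and `∂̄` commute,
`p` commutes with `∂∂̄p`. -/

/-- Mathlib's `Derivation` requires a commutative algebra, so the Leibniz rule is stated directly. -/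
def IsLeibniz {R A : Type*} [Semiring R] [Semiring A] [Module R A] (d : A →ₗ[R] A) : Prop :=
  ∀ a b : A, d (a * b) = d a * b + a * d b

namespace IsLeibniz

variable {R A : Type*} [CommSemiring R]

theorem add [Semiring A] [Module R A] {d e : A →ₗ[R] A} (hd : IsLeibniz d) (he : IsLeibniz e) :
    IsLeibniz (d + e) := fun a b => by
  simp only [LinearMap.add_apply, hd a b, he a b, add_mul, mul_add]
  abel

theorem sub [Ring A] [Module R A] {d e : A →ₗ[R] A} (hd : IsLeibniz d) (he : IsLeibniz e) :
    IsLeibniz (d - e) := fun a b => by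
  simp only [LinearMap.sub_apply, hd a b, he a b, sub_mul, mul_sub]
  abel

theorem smul [Semiring A] [Algebra R A] {d : A →ₗ[R] A} (hd : IsLeibniz d) (c : R) :
    IsLeibniz (c • d) := fun a b => by
  simp only [LinearMap.smul_apply, hd a b, smul_add, smul_mul_assoc, mul_smul_comm]

end IsLeibniz

theorem commute_apply_apply_of_mul_eq_zero {R A : Type*} [Semiring R] [Ring A] [Module R A]
    {D E : A →ₗ[R] A} (hD : IsLeibniz D) (hE : IsLeibniz E) (hDE : Commute D E) {p : A}
    (hDp : D p * p = 0) (hEp : p * E p = 0) : Commute p (D (E p)) := by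
  have hleft : p * D (E p) + D p * E p = 0 := by
    rw [add_comm, ← hD, hEp, map_zero]
  have hright : D (E p) * p + D p * E p = 0 := by
    rw [← Module.End.mul_apply, hDE.eq, Module.End.mul_apply, ← hE, hDp, map_zero]
  exact add_right_cancel (hleft.trans hright.symm)

section HolAntihol

variable {A : Type*} [Ring A] [Algebra ℂ A] {d₁ d₂ : A →ₗ[ℂ] A}

theorem isLeibniz_hol (h₁ : IsLeibniz d₁) (h₂ : IsLeibniz d₂) (τ : ℂ) :
    IsLeibniz (hol d₁ d₂ τ) :=
  ((h₁.smul _).add h₂).smul _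

theorem isLeibniz_antihol (h₁ : IsLeibniz d₁) (h₂ : IsLeibniz d₂) (τ : ℂ) :
    IsLeibniz (antihol d₁ d₂ τ) :=
  ((h₁.smul _).sub h₂).smul _

end HolAntihol

theorem antiselfdual_implies_field_equations_general
    (A : Type*) [Ring A] [Algebra ℂ A]
    (d₁ d₂ : A →ₗ[ℂ] A)
    (hleib₁ : ∀ a b : A, d₁ (a * b) = d₁ a * b + a * d₁ b)
    (hleib₂ : ∀ a b : A, d₂ (a * b) = d₂ a * b + a * d₂ b)
    (hcomm : ∀ a : A, d₁ (d₂ a) = d₂ (d₁ a))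
    (τ : ℂ)
    (p : A)
    (hasd₁ : hol d₁ d₂ τ p * p = 0)
    (hasd₂ : p * antihol d₁ d₂ τ p = 0) :
    p * ((4 : ℂ) • hol d₁ d₂ τ (antihol d₁ d₂ τ p))
      - ((4 : ℂ) • hol d₁ d₂ τ (antihol d₁ d₂ τ p)) * p = 0 := by
  have hcommute : Commute p (hol d₁ d₂ τ (antihol d₁ d₂ τ p)) :=
    commute_apply_apply_of_mul_eq_zero (isLeibniz_hol hleib₁ hleib₂ τ)
      (isLeibniz_antihol hleib₁ hleib₂ τ) (commute_hol_antihol (LinearMap.ext hcomm) τ)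
      hasd₁ hasd₂
  rw [mul_smul_comm, smul_mul_assoc, hcommute.eq, sub_self]

/-- A projection satisfying the anti-self-duality equations satisfies the field equations
`pΔ(p) - Δ(p)p = 0` with `Δ = 4∂∂̄`. -/
theorem antiselfdual_implies_field_equations
    (A : Type*) [Ring A] [Algebra ℂ A]
    (d₁ d₂ : A →ₗ[ℂ] A)
    (hleib₁ : ∀ a b : A, d₁ (a * b) = d₁ a * b + a * d₁ b)
    (hleib₂ : ∀ a b : A, d₂ (a * b) = d₂ a * b + a * d₂ b)
    (hcomm : ∀ a : A, d₁ (d₂ a) = d₂ (d₁ a))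
    (τ : ℂ) (hτ : 0 < τ.im)
    (p : A) (hp : p * p = p)
    (hasd₁ : hol d₁ d₂ τ p * p = 0)
    (hasd₂ : p * antihol d₁ d₂ τ p = 0) :
    p * ((4 : ℂ) • hol d₁ d₂ τ (antihol d₁ d₂ τ p))
      - ((4 : ℂ) • hol d₁ d₂ τ (antihol d₁ d₂ τ p)) * p = 0 :=
  antiselfdual_implies_field_equations_general A d₁ d₂ hleib₁ hleib₂ hcomm τ p hasd₁ hasd₂
end

section
/- Let U₁, U₂ (the left endomorphism action) and Z₁, Z₂ (the right module action) on S(ℝ × ℤ_q) be defined by (U₁ξ)(s,k)=ξ(s-1/q,k-1), (U₂ξ)(s,k)=e^{2πi(s/ε - ak)/q}ξ(s,k), (ξZ₁)(s,k)=ξ(s-ε̃,k-r), (ξZ₂)(s,k)=e^{2πi(s-k/q)}ξ(s,k), where ε̃ = r/q - α, ε = ε̃, and a, r, q ∈ ℤ with ar ≡ 1 mod q. Then the left and right actions commute: Uᵢ(ξZⱼ) = (Uᵢξ)Zⱼ for all i,j ∈ {1,2}. -/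
open Complex Real

lemma ZMod.val_sub_intCast_modEq {q : ℕ} [NeZero q] (k : ZMod q) (c : ℤ) :
    ((k - c).val : ℤ) ≡ k.val - c [ZMOD q] :=
  (ZMod.intCast_eq_intCast_iff _ _ _).1 (by push_cast; simp only [ZMod.natCast_zmod_val])

lemma Complex.exp_two_pi_I_mul_eq_of_sub_eq_intCast {x y : ℂ} (n : ℤ) (h : x - y = n) :
    exp (2 * π * I * x) = exp (2 * π * I * y) := by
  rw [show x = y + n by linear_combination h, mul_add, exp_add, mul_comm _ (n : ℂ),
    exp_int_mul_two_pi_mul_I, mul_one]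

namespace HeisenbergModule

variable {q : ℕ} [NeZero q]

lemma Z₂_phase_U₁_shift (s : ℝ) (k : ZMod q) :
    exp (2 * π * I * (((s - 1 / q : ℝ) : ℂ) - ((k - 1).val : ℂ) / q)) =
      exp (2 * π * I * ((s : ℂ) - (k.val : ℂ) / q)) := by
  obtain ⟨m, hm⟩ := (ZMod.val_sub_intCast_modEq k 1).symm.dvd
  have hq : (q : ℂ) ≠ 0 := NeZero.ne _
  have hmC : ((k - 1).val : ℂ) = k.val - 1 + q * m := by
    simpa [sub_eq_iff_eq_add'] using congrArg (fun z : ℤ => (z : ℂ)) hm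
  refine exp_two_pi_I_mul_eq_of_sub_eq_intCast (-m) ?_
  rw [hmC]
  push_cast
  field_simp
  ring

/-- Up to an integer, the phase mismatch is `(a r - 1) / q`, itself an integer since `a r ≡ 1 [ZMOD q]`. -/
lemma U₂_phase_Z₁_shift {a r : ℤ} (har : a * r ≡ 1 [ZMOD q]) {ε : ℝ} (hε : ε ≠ 0)
    (s : ℝ) (k : ZMod q) :
    exp (2 * π * I * ((((s - ε) / ε : ℝ) : ℂ) - a * ((k - r).val : ℂ)) / q) =
      exp (2 * π * I * (((s / ε : ℝ) : ℂ) - a * (k.val : ℂ)) / q) := by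
  obtain ⟨m, hm⟩ := (ZMod.val_sub_intCast_modEq k r).symm.dvd
  obtain ⟨t, ht⟩ := har.symm.dvd
  have hq : (q : ℂ) ≠ 0 := NeZero.ne _
  have hmC : ((k - r).val : ℂ) = k.val - r + q * m := by
    simpa [sub_eq_iff_eq_add'] using congrArg (fun z : ℤ => (z : ℂ)) hm
  have htC : (a : ℂ) * r - 1 = q * t := by exact_mod_cast ht
  simp_rw [mul_div_assoc]
  refine exp_two_pi_I_mul_eq_of_sub_eq_intCast (t - a * m) ?_
  rw [hmC, sub_div s ε ε, div_self hε]
  push_cast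
  field_simp
  linear_combination htC

end HeisenbergModule

open HeisenbergModule in
theorem left_right_actions_commute_general
    (q : ℕ) (hq : 0 < q) (r a : ℤ)
    (εt : ℝ) (hne : εt ≠ 0)
    (har : (a * r) % (q : ℤ) = 1 % (q : ℤ))
    (U₁ U₂ Z₁ Z₂ : (ℝ → ZMod q → ℂ) → (ℝ → ZMod q → ℂ))
    (hU₁ : ∀ (ξ : ℝ → ZMod q → ℂ) (s : ℝ) (k : ZMod q),
      U₁ ξ s k = ξ (s - 1 / (q : ℝ)) (k - 1))
    (hU₂ : ∀ (ξ : ℝ → ZMod q → ℂ) (s : ℝ) (k : ZMod q),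
      U₂ ξ s k = Complex.exp (2 * (Real.pi : ℂ) * Complex.I *
        (((s / εt : ℝ) : ℂ) - (a : ℂ) * (k.val : ℂ)) / (q : ℂ)) * ξ s k)
    (hZ₁ : ∀ (ξ : ℝ → ZMod q → ℂ) (s : ℝ) (k : ZMod q),
      Z₁ ξ s k = ξ (s - εt) (k - (r : ZMod q)))
    (hZ₂ : ∀ (ξ : ℝ → ZMod q → ℂ) (s : ℝ) (k : ZMod q),
      Z₂ ξ s k = Complex.exp (2 * (Real.pi : ℂ) * Complex.I *
        ((s : ℂ) - (k.val : ℂ) / (q : ℂ))) * ξ s k) :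
    ∀ (ξ : ℝ → ZMod q → ℂ) (s : ℝ) (k : ZMod q),
      U₁ (Z₁ ξ) s k = Z₁ (U₁ ξ) s k ∧
      U₁ (Z₂ ξ) s k = Z₂ (U₁ ξ) s k ∧
      U₂ (Z₁ ξ) s k = Z₁ (U₂ ξ) s k ∧
      U₂ (Z₂ ξ) s k = Z₂ (U₂ ξ) s k := by
  have : NeZero q := ⟨hq.ne'⟩
  intro ξ s k
  refine ⟨?_, ?_, ?_, ?_⟩
  · rw [hU₁, hZ₁, hZ₁, hU₁, sub_right_comm s, sub_right_comm k]
  · rw [hU₁, hZ₂, hZ₂, hU₁, Z₂_phase_U₁_shift]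
  · rw [hU₂, hZ₁, hZ₁, hU₂, U₂_phase_Z₁_shift har hne]
  · rw [hU₂, hZ₂, hZ₂, hU₂, mul_left_comm]

/-- Bimodule property of the Heisenberg module: the left endomorphism action `U₁, U₂`
commutes with the right module action `Z₁, Z₂`, provided `ar ≡ 1 (mod q)`. -/
theorem left_right_actions_commute
    (q : ℕ) (hq : 0 < q) (r a : ℤ) (α : ℝ)
    (εt : ℝ) (hεt : εt = (r : ℝ) / (q : ℝ) - α) (hne : εt ≠ 0)
    (har : (a * r) % (q : ℤ) = 1 % (q : ℤ))
    (U₁ U₂ Z₁ Z₂ : (ℝ → ZMod q → ℂ) → (ℝ → ZMod q → ℂ))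
    (hU₁ : ∀ (ξ : ℝ → ZMod q → ℂ) (s : ℝ) (k : ZMod q),
      U₁ ξ s k = ξ (s - 1 / (q : ℝ)) (k - 1))
    (hU₂ : ∀ (ξ : ℝ → ZMod q → ℂ) (s : ℝ) (k : ZMod q),
      U₂ ξ s k = Complex.exp (2 * (Real.pi : ℂ) * Complex.I *
        (((s / εt : ℝ) : ℂ) - (a : ℂ) * (k.val : ℂ)) / (q : ℂ)) * ξ s k)
    (hZ₁ : ∀ (ξ : ℝ → ZMod q → ℂ) (s : ℝ) (k : ZMod q),
      Z₁ ξ s k = ξ (s - εt) (k - (r : ZMod q)))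
    (hZ₂ : ∀ (ξ : ℝ → ZMod q → ℂ) (s : ℝ) (k : ZMod q),
      Z₂ ξ s k = Complex.exp (2 * (Real.pi : ℂ) * Complex.I *
        ((s : ℂ) - (k.val : ℂ) / (q : ℂ))) * ξ s k) :
    ∀ (ξ : ℝ → ZMod q → ℂ) (s : ℝ) (k : ZMod q),
      U₁ (Z₁ ξ) s k = Z₁ (U₁ ξ) s k ∧
      U₁ (Z₂ ξ) s k = Z₂ (U₁ ξ) s k ∧
      U₂ (Z₁ ξ) s k = Z₁ (U₂ ξ) s k ∧
      U₂ (Z₂ ξ) s k = Z₂ (U₂ ξ) s k :=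
  left_right_actions_commute_general q hq r a εt hne har U₁ U₂ Z₁ Z₂ hU₁ hU₂ hZ₁ hZ₂
end
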